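/- arXiv:2205.14680 — 2 statements merged into one kernel-verified Lean document; each statement's English description precedes it below -/
import Mathlib

section
/- Let a ≥ 1 and b ≥ 1 be integers, let G be a finite simple (a,b)-graph, and let M be a matching of G. Then the contracted graph G_M is (4a−3)-degenerate, i.e., every nonempty subgraph of G_M contains a vertex of degree at most 4a−3. -/
/-- `M` is a matching of `G`, viewed as a set of edges:
all edges lie in `G` and are pairwise non-adjacent (share no vertex). -/
def IsMatchingSet {V : Type*} (G : SimpleGraph V) (M : Set (Sym2 V)) : Prop :=
  M ⊆ G.edgeSet ∧ ∀ e ∈ M, ∀ f ∈ M, e ≠ f → ∀ v : V, ¬(v ∈ e ∧ v ∈ f)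

/-- The graph obtained from `G` by contracting each edge in `M`. -/
def Contract {V : Type*} (G : SimpleGraph V) (M : Set (Sym2 V)) :
    SimpleGraph (Quot fun u v : V => s(u, v) ∈ M) where
  Adj x y := x ≠ y ∧ ∃ u v : V, G.Adj u v ∧ Quot.mk _ u = x ∧ Quot.mk _ v = y
  symm := by
    constructor
    rintro x y ⟨hxy, u, v, huv, hu, hv⟩
    exact ⟨hxy.symm, v, u, huv.symm, hv, hu⟩
  loopless := by
    constructor
    rintro x ⟨hx, -⟩
    exact hx rfl

/-!
Suppose a nonempty subgraph `H` of `G_M` on `n` vertices has minimum degree at least `4a - 2`,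
so `|E(H)| ≥ (2a - 1) n`. Pull `H` back to the subgraph `G'` of `G` spanned by the preimages of
its vertices, with the lifts of its edges and the matching edges inside its contracted vertices.
If `k ≤ n` of the vertices of `H` are contracted ones, then `G'` has at most `n + k` vertices and
at least `|E(H)| + k` edges, so the `(a,b)`-condition gives
`|E(H)| ≤ a n + (a - 1) k - b ≤ (2a - 1) n - b`, a contradiction since `b ≥ 1`.
-/

theorem SimpleGraph.Subgraph.mul_ncard_verts_le_two_mul_ncard_edgeSet {W : Type*} [Finite W]
    {G : SimpleGraph W} (H : G.Subgraph) {d : ℕ}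
    (hd : ∀ v ∈ H.verts, d ≤ (H.neighborSet v).ncard) :
    d * H.verts.ncard ≤ 2 * H.edgeSet.ncard := by
  classical
  have := Fintype.ofFinite W
  have hdeg (v : W) : H.spanningCoe.degree v = (H.neighborSet v).ncard := by
    rw [← card_neighborSet_eq_degree, ← Nat.card_eq_fintype_card]
    rfl
  calc d * H.verts.ncard = ∑ _v ∈ H.verts.toFinset, d := by
        rw [Finset.sum_const, smul_eq_mul, mul_comm, Set.ncard_eq_toFinset_card']
    _ ≤ ∑ v ∈ H.verts.toFinset, H.spanningCoe.degree v :=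
        Finset.sum_le_sum fun v hv => hdeg v ▸ hd v (Set.mem_toFinset.1 hv)
    _ ≤ ∑ v, H.spanningCoe.degree v := Finset.sum_le_sum_of_subset (Finset.subset_univ _)
    _ = 2 * H.edgeSet.ncard := by
        rw [sum_degrees_eq_twice_card_edges, ← edgeSet_spanningCoe, Set.ncard_eq_toFinset_card',
          Set.toFinset_card, edgeFinset_card]

namespace IsMatchingSet

variable {V : Type*} {G : SimpleGraph V} {M : Set (Sym2 V)}

theorem eq_of_mem_of_mem (hM : IsMatchingSet G M) {u v w : V} (huv : s(u, v) ∈ M)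
    (hvw : s(v, w) ∈ M) : u = w := by
  by_cases he : s(u, v) = s(v, w)
  · rcases Sym2.eq_iff.1 he with ⟨rfl, rfl⟩ | ⟨rfl, -⟩ <;> rfl
  · exact absurd ⟨Sym2.mem_mk_right u v, Sym2.mem_mk_left v w⟩ (hM.2 _ huv _ hvw he v)

theorem equivalence (hM : IsMatchingSet G M) :
    Equivalence fun u v : V => u = v ∨ s(u, v) ∈ M where
  refl _ := .inl rfl
  symm := by
    rintro u v (rfl | h)
    · exact .inl rfl
    · exact .inr (Sym2.eq_swap ▸ h)
  trans := by
    rintro u v w (rfl | huv) (rfl | hvw)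
    · exact .inl rfl
    · exact .inr hvw
    · exact .inr huv
    · exact .inl (hM.eq_of_mem_of_mem huv hvw)

theorem quot_mk_eq_iff (hM : IsMatchingSet G M) {u v : V} :
    Quot.mk (fun u v : V => s(u, v) ∈ M) u = Quot.mk _ v ↔ u = v ∨ s(u, v) ∈ M :=
  ⟨fun h => hM.equivalence.eqvGen_iff.1 <|
      Relation.EqvGen.mono (fun _ _ => .inr) _ _ (Quot.eqvGen_exact h),
    fun h => h.elim (congrArg _) fun h => Quot.sound h⟩

theorem eq_or_eq_of_quot_mk_eq (hM : IsMatchingSet G M) {u v w : V}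
    (huv : Quot.mk (fun u v : V => s(u, v) ∈ M) u = Quot.mk _ v)
    (huw : Quot.mk (fun u v : V => s(u, v) ∈ M) u = Quot.mk _ w) : u = v ∨ u = w ∨ v = w := by
  rcases hM.quot_mk_eq_iff.1 huv with h | huv
  · exact .inl h
  rcases hM.quot_mk_eq_iff.1 huw with h | huw
  · exact .inr (.inl h)
  exact .inr (.inr (hM.eq_of_mem_of_mem (Sym2.eq_swap ▸ huv) huw))

end IsMatchingSet

namespace Contract

variable {V : Type*} {G : SimpleGraph V} {M : Set (Sym2 V)}

local notation "π" => Quot.mk (fun u v : V => s(u, v) ∈ M)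

def comapSubgraph (H : (Contract G M).Subgraph) : G.Subgraph where
  verts := π ⁻¹' H.verts
  Adj u v := G.Adj u v ∧ π u ∈ H.verts ∧ (π u = π v ∨ H.Adj (π u) (π v))
  adj_sub h := h.1
  edge_vert h := h.2.1
  symm := ⟨by
    rintro u v ⟨huv, hu, h | h⟩
    · exact ⟨huv.symm, h ▸ hu, .inl h.symm⟩
    · exact ⟨huv.symm, H.edge_vert h.symm, .inr h.symm⟩⟩

/-- The vertices over a contracted vertex of `H` other than the chosen representative of their
class: one for each contracted vertex of `H`. -/
def extraVerts (H : (Contract G M).Subgraph) : Set V :=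
  {u | π u ∈ H.verts ∧ (π u).out ≠ u}

variable {H : (Contract G M).Subgraph}

theorem injOn_extraVerts (hM : IsMatchingSet G M) :
    Set.InjOn π (extraVerts H) := by
  rintro u ⟨-, hu⟩ v ⟨-, hv⟩ huv
  rcases hM.eq_or_eq_of_quot_mk_eq huv (Quot.out_eq _).symm with h | h | h
  · exact h
  · exact absurd h.symm hu
  · exact absurd (huv ▸ h.symm) hv

variable [Finite V]

theorem ncard_extraVerts_le (hM : IsMatchingSet G M) :
    (extraVerts H).ncard ≤ H.verts.ncard :=
  Set.ncard_le_ncard_of_injOn _ (fun _ hu => hu.1) (injOn_extraVerts hM) (Set.toFinite _)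

theorem ncard_verts_comapSubgraph_le :
    (comapSubgraph H).verts.ncard ≤ H.verts.ncard + (extraVerts H).ncard := by
  have hsplit : (comapSubgraph H).verts ⊆ {u | π u ∈ H.verts ∧ (π u).out = u} ∪ extraVerts H :=
    fun u hu => (em _).imp (⟨hu, ·⟩) (⟨hu, ·⟩)
  have hreps : {u | π u ∈ H.verts ∧ (π u).out = u}.ncard ≤ H.verts.ncard :=
    Set.ncard_le_ncard_of_injOn _ (fun _ hu => hu.1)
      (fun u hu v hv huv => hu.2.symm.trans ((congrArg Quot.out huv).trans hv.2))
      (Set.toFinite _)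
  exact (Set.ncard_le_ncard hsplit).trans ((Set.ncard_union_le _ _).trans (by omega))

theorem ncard_edgeSet_add_ncard_extraVerts_le (hM : IsMatchingSet G M) :
    H.edgeSet.ncard + (extraVerts H).ncard ≤ (comapSubgraph H).edgeSet.ncard := by
  have hcover : H.edgeSet ∪ (fun u => s(π u, π u)) '' extraVerts H ⊆
      Sym2.map π '' (comapSubgraph H).edgeSet := by
    rintro e (he | ⟨u, ⟨hu, hout⟩, rfl⟩)
    · induction e using Sym2.ind with | h x y =>
      obtain ⟨-, u, v, huv, rfl, rfl⟩ := H.adj_sub he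
      exact ⟨s(u, v), ⟨huv, H.edge_vert he, .inr he⟩, rfl⟩
    · have hm : s(u, (π u).out) ∈ M :=
        (hM.quot_mk_eq_iff.1 (Quot.out_eq _).symm).resolve_left (Ne.symm hout)
      refine ⟨s(u, (π u).out), ⟨hM.1 hm, hu, .inl (Quot.out_eq _).symm⟩, ?_⟩
      rw [Sym2.map_mk, Quot.out_eq]
  have hdisj : Disjoint H.edgeSet ((fun u => s(π u, π u)) '' extraVerts H) :=
    Set.disjoint_left.2 fun _ he ⟨_, _, hu⟩ => (H.adj_sub (hu ▸ he)).1 rfl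
  have hinj : Set.InjOn (fun u => s(π u, π u)) (extraVerts H) := fun u hu v hv h =>
    injOn_extraVerts hM hu hv ((Sym2.eq_iff.1 h).elim And.left And.left)
  calc H.edgeSet.ncard + (extraVerts H).ncard
      = (H.edgeSet ∪ (fun u => s(π u, π u)) '' extraVerts H).ncard := by
        rw [Set.ncard_union_eq hdisj, hinj.ncard_image]
    _ ≤ (Sym2.map π '' (comapSubgraph H).edgeSet).ncard := Set.ncard_le_ncard hcover
    _ ≤ (comapSubgraph H).edgeSet.ncard := Set.ncard_image_le (Set.toFinite _)

end Contract

/-- If `G` is an `(a,b)`-graph with `a ≥ 1`, `b ≥ 1`, and `M` is a matching of `G`,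
then the contracted graph `G_M` is `(4a−3)`-degenerate: every nonempty subgraph
of `G_M` contains a vertex of degree at most `4a−3`. -/
theorem stmt_1 {V : Type*} [Fintype V] (G : SimpleGraph V) (a b : ℤ)
    (ha : 1 ≤ a) (hb : 1 ≤ b)
    (hG : ∀ G' : G.Subgraph, G'.verts.Nonempty →
      (G'.edgeSet.ncard : ℤ) ≤ a * (G'.verts.ncard : ℤ) - b)
    (M : Set (Sym2 V)) (hM : IsMatchingSet G M) :
    ∀ H : (Contract G M).Subgraph, H.verts.Nonempty →
      ∃ v ∈ H.verts, ((H.neighborSet v).ncard : ℤ) ≤ 4 * a - 3 := by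
  rintro H ⟨x, hx⟩
  by_contra! hdeg
  obtain ⟨d, hd⟩ : ∃ d : ℕ, (d : ℤ) = 4 * a - 2 := ⟨(4 * a - 2).toNat, by omega⟩
  have hH : d * H.verts.ncard ≤ 2 * H.edgeSet.ncard :=
    H.mul_ncard_verts_le_two_mul_ncard_edgeSet fun v hv => by have := hdeg v hv; omega
  have hlift : (Contract.comapSubgraph H).verts.Nonempty :=
    ⟨x.out, show Quot.mk _ x.out ∈ H.verts by rwa [Quot.out_eq]⟩
  have hV := Contract.ncard_verts_comapSubgraph_le (H := H)
  have hE := Contract.ncard_edgeSet_add_ncard_extraVerts_le (H := H) hM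
  have hk := Contract.ncard_extraVerts_le (H := H) hM
  have hab := hG _ hlift
  zify at hH hV hE hk
  rw [hd] at hH
  nlinarith [mul_nonneg (sub_nonneg.2 ha) (sub_nonneg.2 hk)]
end

section
/- Let a ≥ 1 and b ≥ 1 be integers and let G be a finite simple (a,b)-graph, i.e., every subgraph H of G satisfies |E(H)| ≤ a·|V(H)| − b. Then every matching M of G can be partitioned into at most 4a − 2 induced matchings of G. -/
/-- Two edges of `G` are at distance at most 2: they share a vertex, or some
edge of `G` shares a vertex with each of them. -/
def NearEdges {V : Type*} (G : SimpleGraph V) (e f : Sym2 V) : Prop :=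
  (∃ v, v ∈ e ∧ v ∈ f) ∨ ∃ g ∈ G.edgeSet, (∃ v, v ∈ e ∧ v ∈ g) ∧ (∃ v, v ∈ g ∧ v ∈ f)

/-- `M` is an induced (strong) matching of `G`: a set of edges of `G` any two
distinct members of which are at distance greater than 2 (in particular,
non-adjacent and not joined by any edge of `G`). -/
def IsInducedMatching {V : Type*} (G : SimpleGraph V) (M : Set (Sym2 V)) : Prop :=
  M ⊆ G.edgeSet ∧ ∀ e ∈ M, ∀ f ∈ M, e ≠ f → ¬ NearEdges G e f


/-!
For a matching `S` of an `(a, b)`-graph, two edges of `S` at distance 2 are joined by an edge of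
`G` outside `S`, and such an edge, read as an ordered pair of vertices, determines the ordered pair
of `S`-edges it joins. Applying sparsity to the subgraph induced on the at most `2|S|` vertices
covered by `S` bounds the number of these ordered pairs by `2(2a|S| - b - |S|) < (4a - 2)|S|`.
Hence some edge of `S` is near fewer than `4a - 2` others, and a greedy colouring of the
"nearness" graph on `M` with `4a - 2` colours yields the partition into induced matchings.
-/

section

open Finset

variable {V : Type*}

theorem SimpleGraph.exists_coloring_of_forall_exists_degree_lt {α : Type*} [DecidableEq α]
    (K : SimpleGraph α) [DecidableRel K.Adj] {k : ℕ} (hk : 0 < k) (s : Finset α)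
    (hs : ∀ t ⊆ s, t.Nonempty → ∃ x ∈ t, #{y ∈ t | K.Adj x y} < k) :
    ∃ c : α → Fin k, ∀ x ∈ s, ∀ y ∈ s, K.Adj x y → c x ≠ c y := by
  induction s using Finset.strongInduction with
  | H s ih =>
    rcases s.eq_empty_or_nonempty with rfl | hne
    · exact ⟨fun _ => ⟨0, hk⟩, by simp⟩
    obtain ⟨x, hx, hdeg⟩ := hs s subset_rfl hne
    obtain ⟨c, hc⟩ :=
      ih (s.erase x) (erase_ssubset hx) fun t ht => hs t (ht.trans (erase_subset _ _))
    obtain ⟨i, -, hi⟩ := exists_mem_notMem_of_card_lt_card (t := (univ : Finset (Fin k)))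
      (s := image c {y ∈ s | K.Adj x y}) (by simpa using card_image_le.trans_lt hdeg)
    have hix : ∀ y ∈ s, K.Adj x y → i ≠ c y := fun y hy hxy h =>
      hi (h ▸ mem_image_of_mem c (mem_filter.2 ⟨hy, hxy⟩))
    refine ⟨Function.update c x i, fun y hy z hz hyz => ?_⟩
    rcases eq_or_ne x y with rfl | hxy <;> rcases eq_or_ne x z with rfl | hxz
    · exact (K.loopless.irrefl _ hyz).elim
    · simpa [hxz.symm] using hix z hz hyz
    · simpa [hxy.symm] using (hix y hy hyz.symm).symm
    · simpa [hxy.symm, hxz.symm] using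
        hc y (mem_erase.2 ⟨hxy.symm, hy⟩) z (mem_erase.2 ⟨hxz.symm, hz⟩) hyz

/-- `G` is an `(a, b)`-graph. -/
def IsSparse (G : SimpleGraph V) (a b : ℕ) : Prop :=
  ∀ H : G.Subgraph, H.verts.Nonempty →
    (H.edgeSet.ncard : ℤ) ≤ (a : ℤ) * (H.verts.ncard : ℤ) - (b : ℤ)

/-- The square of the line graph: induced matchings are its independent sets. -/
def nearGraph (G : SimpleGraph V) : SimpleGraph (Sym2 V) where
  Adj e f := e ≠ f ∧ NearEdges G e f
  symm := ⟨fun e f => by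
    rintro ⟨hef, ⟨v, hve, hvf⟩ | ⟨g, hg, ⟨u, hue, hug⟩, ⟨w, hwg, hwf⟩⟩⟩
    · exact ⟨hef.symm, .inl ⟨v, hvf, hve⟩⟩
    · exact ⟨hef.symm, .inr ⟨g, hg, ⟨w, hwf, hwg⟩, ⟨u, hug, hue⟩⟩⟩⟩
  loopless := ⟨fun e h => h.1 rfl⟩

variable {G : SimpleGraph V}

@[simp]
theorem nearGraph_adj {e f : Sym2 V} : (nearGraph G).Adj e f ↔ e ≠ f ∧ NearEdges G e f :=
  Iff.rfl

namespace IsMatchingSet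

variable {M N : Set (Sym2 V)}

theorem mono (hM : IsMatchingSet G M) (hNM : N ⊆ M) : IsMatchingSet G N :=
  ⟨hNM.trans hM.1, fun e he f hf => hM.2 e (hNM he) f (hNM hf)⟩

theorem eq_of_mem_of_mem_s11 (hM : IsMatchingSet G M) {e f : Sym2 V} {v : V} (he : e ∈ M)
    (hf : f ∈ M) (hve : v ∈ e) (hvf : v ∈ f) : e = f :=
  by_contra fun hef => hM.2 e he f hf hef v ⟨hve, hvf⟩

theorem exists_adj_of_nearGraph_adj (hM : IsMatchingSet G M) {e f : Sym2 V} (he : e ∈ M)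
    (hf : f ∈ M) (h : (nearGraph G).Adj e f) :
    ∃ x ∈ e, ∃ y ∈ f, G.Adj x y ∧ s(x, y) ∉ M := by
  rw [nearGraph_adj] at h
  obtain ⟨hef, ⟨v, hve, hvf⟩ | ⟨g, hg, ⟨x, hxe, hxg⟩, ⟨y, hyg, hyf⟩⟩⟩ := h
  · exact absurd (hM.eq_of_mem_of_mem_s11 he hf hve hvf) hef
  have hxy : x ≠ y := by
    rintro rfl
    exact hef (hM.eq_of_mem_of_mem_s11 he hf hxe hyf)
  obtain rfl : g = s(x, y) := Sym2.eq_of_ne_mem hxy hxg hyg (Sym2.mem_mk_left x y)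
    (Sym2.mem_mk_right x y)
  refine ⟨x, hxe, y, hyf, hg, fun hgM => hef ?_⟩
  exact (hM.eq_of_mem_of_mem_s11 he hgM hxe hxg).trans (hM.eq_of_mem_of_mem_s11 hgM hf hyg hyf)

end IsMatchingSet

theorem card_biUnion_sym2_toFinset_le [DecidableEq V] (S : Finset (Sym2 V)) :
    #(S.biUnion Sym2.toFinset) ≤ 2 * #S :=
  calc #(S.biUnion Sym2.toFinset)
      ≤ ∑ e ∈ S, #e.toFinset := card_biUnion_le
    _ ≤ ∑ _e ∈ S, 2 := sum_le_sum fun e _ => by rw [Sym2.card_toFinset]; split_ifs <;> omega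
    _ = 2 * #S := by rw [sum_const, smul_eq_mul, mul_comm]

theorem card_nearGraph_adj_pairs_le [Fintype V] [DecidableEq V]
    [DecidableRel (nearGraph G).Adj] {S : Finset (Sym2 V)} (hS : IsMatchingSet G ↑S) :
    #{p ∈ S ×ˢ S | (nearGraph G).Adj p.1 p.2} ≤
      2 * (((⊤ : G.Subgraph).induce ↑(S.biUnion Sym2.toFinset)).edgeSet \ ↑S).ncard := by
  classical
  set C := ((⊤ : G.Subgraph).induce ↑(S.biUnion Sym2.toFinset)).edgeSet \ ↑S
  have hC : (SimpleGraph.fromEdgeSet C).edgeSet = C := by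
    rw [SimpleGraph.edgeSet_fromEdgeSet, sdiff_eq_left]
    exact Set.subset_compl_iff_disjoint_right.mp (Set.sdiff_subset.trans
      ((SimpleGraph.Subgraph.edgeSet_subset _).trans G.edgeSet_subset_compl_diagSet))
  -- A dart `(x, y)` of `C` is related to at most one pair `(e, f)`, since `S` is a matching.
  calc #{p ∈ S ×ˢ S | (nearGraph G).Adj p.1 p.2}
      ≤ #(univ : Finset (SimpleGraph.fromEdgeSet C).Dart) := by
        refine card_le_card_of_forall_subsingleton
          (fun p d => d.fst ∈ p.1 ∧ d.snd ∈ p.2) ?_ ?_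
        · intro p hp
          simp only [mem_filter, mem_product] at hp
          obtain ⟨⟨he, hf⟩, hef⟩ := hp
          obtain ⟨x, hx, y, hy, hxy, hxyS⟩ := hS.exists_adj_of_nearGraph_adj he hf hef
          refine ⟨⟨(x, y), ?_⟩, mem_univ _, hx, hy⟩
          simpa [SimpleGraph.fromEdgeSet_adj, C, hxyS, hxy.ne] using
            ⟨⟨_, he, hx⟩, ⟨_, hf, hy⟩, hxy⟩
        · rintro d - p ⟨hp, hpx, hpy⟩ q ⟨hq, hqx, hqy⟩
          simp only [mem_filter, mem_product] at hp hq
          exact Prod.ext (hS.eq_of_mem_of_mem_s11 hp.1.1 hq.1.1 hpx hqx)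
            (hS.eq_of_mem_of_mem_s11 hp.1.2 hq.1.2 hpy hqy)
    _ = 2 * C.ncard := by
        rw [card_univ, SimpleGraph.dart_card_eq_twice_card_edges, ← Set.ncard_coe_finset,
          SimpleGraph.coe_edgeFinset, hC]

theorem IsSparse.exists_nearGraph_degree_lt [Fintype V] [DecidableRel (nearGraph G).Adj]
    {a b : ℕ} (hG : IsSparse G a b) (hb : 1 ≤ b) {S : Finset (Sym2 V)}
    (hS : IsMatchingSet G ↑S) (hne : S.Nonempty) :
    ∃ e ∈ S, #{f ∈ S | (nearGraph G).Adj e f} < 4 * a - 2 := by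
  classical
  set W := S.biUnion Sym2.toFinset
  set H := (⊤ : G.Subgraph).induce ↑W
  have hSH : ↑S ⊆ H.edgeSet := by
    intro e he
    induction e using Sym2.ind with
    | _ x y =>
      simpa [H, W] using ⟨⟨_, he, Sym2.mem_mk_left x y⟩, ⟨_, he, Sym2.mem_mk_right x y⟩,
        hS.1 he⟩
  have hW : H.verts.ncard ≤ 2 * #S := by
    simpa [H] using card_biUnion_sym2_toFinset_le S
  have hedges : (H.edgeSet \ ↑S).ncard + #S = H.edgeSet.ncard := by
    simpa using Set.ncard_sdiff_add_ncard_of_subset hSH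
  have hsparse := hG H (by
    obtain ⟨e, he⟩ := hne
    exact ⟨e.out.1, by simpa [H, W] using ⟨e, he, Sym2.out_fst_mem e⟩⟩)
  have hpairs : #{p ∈ S ×ˢ S | (nearGraph G).Adj p.1 p.2} ≤ 2 * (H.edgeSet \ ↑S).ncard :=
    card_nearGraph_adj_pairs_le hS
  have hsum : ∑ e ∈ S, #{f ∈ S | (nearGraph G).Adj e f} =
      #{p ∈ S ×ˢ S | (nearGraph G).Adj p.1 p.2} := by
    simp only [card_filter, sum_product]
  by_contra! hdeg
  have hlow : (4 * a - 2) * #S ≤ #{p ∈ S ×ˢ S | (nearGraph G).Adj p.1 p.2} := by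
    rw [← hsum, mul_comm]
    exact card_nsmul_le_sum _ _ _ hdeg
  have h4a : 4 * a * #S ≤ (4 * a - 2 + 2) * #S := Nat.mul_le_mul_right _ (by omega)
  have haW : a * H.verts.ncard ≤ a * (2 * #S) := Nat.mul_le_mul_left _ hW
  zify at hedges hpairs hlow h4a haW
  linarith

end

/-- If `G` is an `(a,b)`-graph with `a ≥ 1`, `b ≥ 1` (every nonempty subgraph
`H` satisfies `|E(H)| ≤ a·|V(H)| − b`), then every matching of `G` can be
partitioned into at most `4a − 2` induced matchings of `G`. -/
theorem stmt_11 {V : Type*} [Fintype V] (G : SimpleGraph V) (a b : ℕ)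
    (ha : 1 ≤ a) (hb : 1 ≤ b)
    (hG : ∀ H : G.Subgraph, H.verts.Nonempty →
      (H.edgeSet.ncard : ℤ) ≤ (a : ℤ) * (H.verts.ncard : ℤ) - (b : ℤ))
    (M : Set (Sym2 V)) (hM : IsMatchingSet G M) :
    ∃ P : Fin (4 * a - 2) → Set (Sym2 V),
      (∀ i, IsInducedMatching G (P i)) ∧
      (∀ i j, i ≠ j → Disjoint (P i) (P j)) ∧
      (⋃ i, P i) = M := by
  classical
  obtain ⟨c, hc⟩ := (nearGraph G).exists_coloring_of_forall_exists_degree_lt (k := 4 * a - 2)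
    (by omega) M.toFinset fun S hS hne =>
      IsSparse.exists_nearGraph_degree_lt hG hb (hM.mono (by simpa using hS)) hne
  refine ⟨fun i => {e ∈ M | c e = i}, fun i => ⟨fun e he => hM.1 he.1, ?_⟩, ?_, ?_⟩
  · rintro e ⟨he, rfl⟩ f ⟨hf, hcf⟩ hef hnear
    exact hc e (by simpa using he) f (by simpa using hf) ⟨hef, hnear⟩ hcf.symm
  · intro i j hij
    exact Set.disjoint_left.2 fun e hei hej => hij (hei.2.symm.trans hej.2)
  · ext e
    simp
end
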